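/- Let a = (a_1, …, a_n) be a nonempty list of even nonzero integers, let x_i = [a_1, …, a_i] for 0 ≤ i ≤ n (so x_0 = 0), and let (d_1, e_1), …, (d_n, e_n) be the auxiliary data sequence of a, i.e. the sequence produced by the auxiliary recursion from the initial pair (d_1, e_1) = (1,1) if |a_1| = 2 and (d_1, e_1) = (1,0) if |a_1| ≥ 4. Then for every 1 ≤ i ≤ n: x_{i−1} is a Farey parent of x_i, d_i = d(x_i) − d(x_{i−1}), and e_i = d(x_i) − d(w_i), where w_i denotes the Farey parent of x_i other than x_{i−1}. In particular d(x_i) = d_1 + d_2 + … + d_i for all i, and d([a]) = d_1 + … + d_n. -/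
import Mathlib


/-- The continued fraction value `[a₁, …, aₙ] = 1/(a₁ + 1/(a₂ + ⋯ + 1/aₙ))` of a
list of integers, defined recursively with `[] = 0`, using the total division of `ℚ`. -/
def cfVal : List ℤ → ℚ
  | [] => 0
  | a :: l => 1 / ((a : ℚ) + cfVal l)

/-- `u` and `v` are the two Farey parents of `x`: there are integers `a, b, c, d` with
`1 ≤ b, d`, `b + d = q`, `a + c = p`, `a·d − b·c = ±1`, `u = a/b` and `v = c/d`,
where `x = p/q` in lowest terms. -/
def IsFareyParents (x u v : ℚ) : Prop :=
  ∃ a b c d : ℤ, 1 ≤ b ∧ 1 ≤ d ∧ b + d = (x.den : ℤ) ∧ a + c = x.num ∧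
    (a * d - b * c = 1 ∨ a * d - b * c = -1) ∧
    u = (a : ℚ) / (b : ℚ) ∧ v = (c : ℚ) / (d : ℚ)

/-- The graph of the depth function on `ℚ`: integers have depth `0`, and otherwise
`d(x) = 1 + min(d(u), d(v))` where `u, v` are the two Farey parents of `x`. -/
inductive DepthRel : ℚ → ℕ → Prop
  | int (x : ℚ) (h : x.den = 1) : DepthRel x 0
  | step (x u v : ℚ) (m k : ℕ) (h : x.den ≠ 1) (hp : IsFareyParents x u v)
      (hu : DepthRel u m) (hv : DepthRel v k) : DepthRel x (1 + min m k)

/-- The depth `d(x)` of a rational number. -/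
noncomputable def fareyDepth (x : ℚ) : ℕ := sInf {n | DepthRel x n}

/-- One step of the auxiliary recursion: given the auxiliary data `prev = (d, e)` at the
previous entry `aprev`, produce the auxiliary data at the next entry `a`. -/
def auxStep (prev : ℕ × ℕ) (aprev a : ℤ) : ℕ × ℕ :=
  if 4 ≤ |a| then (1, 0)
  else if 0 < aprev * a then
    (if prev = (0, 1) then (1, 0) else (1, 1))
  else
    (if prev = (1, 0) then (1, 1) else (0, 1))

/-- The initial auxiliary data determined by the first entry `a₁`:
`(1,1)` if `|a₁| = 2` and `(1,0)` if `|a₁| ≥ 4`. -/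
def auxInit (a : ℤ) : ℕ × ℕ := if |a| = 2 then (1, 1) else (1, 0)

/-- The tail of the auxiliary data sequence: given the data `ι` at the previous entry
`aprev`, produce the sequence of auxiliary data along the remaining entries. -/
def auxSeqAux (ι : ℕ × ℕ) (aprev : ℤ) : List ℤ → List (ℕ × ℕ)
  | [] => []
  | a :: l => auxStep ι aprev a :: auxSeqAux (auxStep ι aprev a) a l

/-- The auxiliary data sequence `(d₁,e₁), …, (dₙ,eₙ)` of a list of integers, produced by
the auxiliary recursion starting from the initial pair `ι = (d₁, e₁)`. -/
def auxSeq (ι : ℕ × ℕ) : List ℤ → List (ℕ × ℕ)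
  | [] => []
  | a :: l => ι :: auxSeqAux ι a l


/-- Continuant of an integer list (front recurrence). -/
def K : List ℤ → ℤ
  | [] => 1
  | [a] => a
  | a :: b :: l => a * K (b :: l) + K l

/-- Continuant of the tail. -/
def Kt : List ℤ → ℤ
  | [] => 0
  | _ :: l => K l

def J (l : List ℤ) : ℤ := if l = [] then 0 else K l.dropLast
def Jt (l : List ℤ) : ℤ := if l = [] then 1 else Kt l.dropLast

@[simp] lemma K_nil : K [] = 1 := rfl
@[simp] lemma Kt_nil : Kt [] = 0 := rfl
@[simp] lemma Kt_cons (a : ℤ) (l : List ℤ) : Kt (a :: l) = K l := rfl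

lemma K_cons (a : ℤ) (l : List ℤ) : K (a :: l) = a * K l + Kt l := by
  cases l with
  | nil => simp [K]
  | cons b l => rfl

lemma Kt_dropLast (b : ℤ) (l : List ℤ) : Kt ((b :: l).dropLast) = J l := by
  cases l with
  | nil => simp [J]
  | cons c l => simp [List.dropLast_cons_of_ne_nil (l := c :: l) (by simp), J]

lemma J_cons2 (a b : ℤ) (l : List ℤ) : J (a :: b :: l) = a * J (b :: l) + J l := by
  simp only [J, List.cons_ne_nil, reduceIte,
    List.dropLast_cons_of_ne_nil (l := b :: l) (by simp), K_cons, Kt_dropLast]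

lemma K_append (l : List ℤ) (c : ℤ) : K (l ++ [c]) = c * K l + J l := by
  induction l using K.induct with
  | case1 => simp [K, J]
  | case2 a => simp [K, J]; ring
  | case3 a b l ih1 ih2 =>
      have e1 : (a :: b :: l) ++ [c] = a :: b :: (l ++ [c]) := by simp
      rw [e1, show K (a :: b :: (l ++ [c])) = a * K (b :: (l ++ [c])) + K (l ++ [c]) from rfl]
      have e2 : b :: (l ++ [c]) = (b :: l) ++ [c] := by simp
      rw [e2, ih1, ih2, show K (a :: b :: l) = a * K (b :: l) + K l from rfl, J_cons2]
      ring

lemma Kt_append (l : List ℤ) (c : ℤ) : Kt (l ++ [c]) = c * Kt l + Jt l := by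
  cases l with
  | nil => simp [Kt, Jt, K]
  | cons a l =>
      simp only [List.cons_append, Kt_cons, K_append, Jt, J, List.cons_ne_nil, reduceIte]
      cases l with
      | nil => simp [K, Kt]
      | cons b l => simp [List.dropLast_cons_of_ne_nil (l := b :: l) (by simp), Kt]

def Dt (l : List ℤ) : ℤ := K l * Jt l - J l * Kt l

@[simp] lemma Dt_nil : Dt [] = 1 := by simp [Dt, J, Jt, K]

lemma J_append (l : List ℤ) (c : ℤ) : J (l ++ [c]) = K l := by
  simp [J, List.dropLast_concat]

lemma Jt_append (l : List ℤ) (c : ℤ) : Jt (l ++ [c]) = Kt l := by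
  simp [Jt, List.dropLast_concat]

lemma Dt_append (l : List ℤ) (c : ℤ) : Dt (l ++ [c]) = - Dt l := by
  simp only [Dt, K_append, Kt_append, J_append, Jt_append]; ring

lemma Dt_pm (l : List ℤ) : Dt l = 1 ∨ Dt l = -1 := by
  induction l using List.reverseRecOn with
  | nil => simp
  | append_singleton l c ih => rw [Dt_append]; omega

lemma abs_helper (x y z : ℤ) (hx : 2 ≤ |x|) : 2 * |y| - |z| ≤ |x * y + z| := by
  have h1 : |x * y| - |-z| ≤ |x * y - -z| := abs_sub_abs_le_abs_sub _ _
  rw [abs_mul, abs_neg, sub_neg_eq_add] at h1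
  have h2 : 2 * |y| ≤ |x| * |y| := mul_le_mul_of_nonneg_right hx (abs_nonneg _)
  linarith

lemma mag1 : ∀ l : List ℤ, (∀ a ∈ l, a ≠ 0) → (∀ a ∈ l.dropLast, 2 ≤ |a|) →
    1 ≤ |K l| ∧ |Kt l| ≤ |K l| := by
  intro l
  induction l with
  | nil => intro _ _; simp
  | cons a l ih =>
      intro h1 h2
      cases l with
      | nil =>
          have h0 : a ≠ 0 := h1 a (by simp)
          have h0' : 0 < |a| := abs_pos.mpr h0
          constructor
          · show 1 ≤ |K [a]|; rw [show K [a] = a from rfl]; omega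
          · show |Kt [a]| ≤ |K [a]|; rw [show Kt [a] = 1 from rfl, show K [a] = a from rfl]
            rw [abs_one]; linarith
      | cons b l' =>
          have ha : 2 ≤ |a| := h2 a (by
            rw [List.dropLast_cons_of_ne_nil (by simp)]; simp)
          obtain ⟨ih1, ih2⟩ := ih (fun x hx => h1 x (by simp [hx]))
            (fun x hx => h2 x (by
              rw [List.dropLast_cons_of_ne_nil (by simp)]; simp [hx]))
          rw [K_cons a (b :: l'), Kt_cons a (b :: l')]
          have habs := abs_helper a (K (b :: l')) (Kt (b :: l')) ha
          constructor
          · linarith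
          · linarith

lemma mag2 : ∀ l : List ℤ, (∀ a ∈ l, 2 ≤ |a|) → |Kt l| < |K l| := by
  intro l
  induction l with
  | nil => intro _; simp
  | cons a l ih =>
      intro h1
      have ha : 2 ≤ |a| := h1 a (by simp)
      have ih1 := ih (fun x hx => h1 x (by simp [hx]))
      rw [K_cons, Kt_cons]
      have habs := abs_helper a (K l) (Kt l) ha
      have h0 : 0 ≤ |Kt l| := abs_nonneg _
      linarith

lemma mag3 : ∀ l : List ℤ, (∀ a ∈ l, 2 ≤ |a|) → |J l| < |K l| := by
  intro l
  induction l using List.reverseRecOn with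
  | nil => intro _; simp [J]
  | append_singleton l c ih =>
      intro h1
      have hc : 2 ≤ |c| := h1 c (by simp)
      have ih1 := ih (fun x hx => h1 x (by simp [hx]))
      rw [K_append, J_append]
      have habs := abs_helper c (K l) (J l) hc
      have h0 : 0 ≤ |J l| := abs_nonneg _
      linarith

lemma K_big (l : List ℤ) (c : ℤ) (h1 : ∀ a ∈ l, 2 ≤ |a|) (hc : 2 ≤ |c|) :
    |K l| + 1 ≤ |K (l ++ [c])| := by
  have h3 := mag3 l h1
  have h0 : 0 ≤ |J l| := abs_nonneg _
  rw [K_append]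
  have habs := abs_helper c (K l) (J l) hc
  linarith

lemma K_ne (l : List ℤ) (h1 : ∀ a ∈ l, a ≠ 0) (h2 : ∀ a ∈ l.dropLast, 2 ≤ |a|) :
    K l ≠ 0 := by
  have h := (mag1 l h1 h2).1
  rcases eq_or_ne (K l) 0 with h0 | h0
  · rw [h0] at h; norm_num at h
  · exact h0

lemma cfVal_eq : ∀ l : List ℤ, (∀ a ∈ l, a ≠ 0) → (∀ a ∈ l.dropLast, 2 ≤ |a|) →
    cfVal l = (Kt l : ℚ) / (K l : ℚ) := by
  intro l
  induction l with
  | nil => intro _ _; simp [cfVal]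
  | cons a l ih =>
      intro h1 h2
      have h1' : ∀ x ∈ l, x ≠ 0 := fun x hx => h1 x (by simp [hx])
      have h2' : ∀ x ∈ l.dropLast, 2 ≤ |x| := by
        intro x hx
        cases l with
        | nil => simp at hx
        | cons b l' =>
            exact h2 x (by rw [List.dropLast_cons_of_ne_nil (by simp)]; simp [hx])
      have hK : (K l : ℚ) ≠ 0 := by exact_mod_cast K_ne l h1' h2'
      rw [cfVal, ih h1' h2', K_cons, Kt_cons]
      rw [show (a : ℚ) + (Kt l : ℚ) / (K l : ℚ) = ((a * K l + Kt l : ℤ) : ℚ) / (K l : ℚ) by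
        push_cast; field_simp]
      rw [one_div_div]

lemma cfVal_merge : ∀ (l : List ℤ) (b σ : ℤ), σ = 1 ∨ σ = -1 →
    cfVal (l ++ [b, σ]) = cfVal (l ++ [b + σ]) := by
  intro l
  induction l with
  | nil =>
      intro b σ hσ
      rcases hσ with rfl | rfl <;> simp [cfVal]
  | cons a l ih =>
      intro b σ hσ
      simp only [List.cons_append, cfVal, List.append_eq]
      rw [ih b σ hσ]

lemma K_coprime (l : List ℤ) : IsCoprime (K l) (Kt l) := by
  rcases Dt_pm l with h | h
  · exact ⟨Jt l, -(J l), by unfold Dt at h; linarith⟩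
  · exact ⟨-(Jt l), J l, by unfold Dt at h; linarith⟩

def sg (x : ℤ) : ℤ := if 0 ≤ x then 1 else -1

lemma sg_pm (x : ℤ) : sg x = 1 ∨ sg x = -1 := by unfold sg; split <;> simp

lemma sg_mul (x : ℤ) (hx : x ≠ 0) : sg x * x = |x| := by
  unfold sg; split <;> rename_i h
  · rw [abs_of_nonneg h]; ring
  · rw [abs_of_neg (by omega)]; ring

lemma cf_num_den (l : List ℤ) (h1 : ∀ a ∈ l, a ≠ 0) (h2 : ∀ a ∈ l.dropLast, 2 ≤ |a|)
    (ε : ℤ) (hε : ε = 1 ∨ ε = -1) (hpos : 0 < ε * K l) :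
    (cfVal l).num = ε * Kt l ∧ ((cfVal l).den : ℤ) = ε * K l := by
  have hcop : Nat.Coprime (ε * Kt l).natAbs (ε * K l).natAbs := by
    have h := K_coprime l
    rw [Int.isCoprime_iff_gcd_eq_one] at h
    have : (ε * Kt l).natAbs = (Kt l).natAbs := by
      rcases hε with rfl | rfl <;> simp
    have : (ε * K l).natAbs = (K l).natAbs := by
      rcases hε with rfl | rfl <;> simp
    unfold Nat.Coprime
    rcases hε with rfl | rfl <;>
      simpa [Int.gcd, Nat.coprime_comm] using Nat.Coprime.symm h
  have hval : cfVal l = ((ε * Kt l : ℤ) : ℚ) / ((ε * K l : ℤ) : ℚ) := by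
    rw [cfVal_eq l h1 h2]
    push_cast
    rw [mul_div_mul_left]
    exact_mod_cast (by rcases hε with rfl | rfl <;> norm_num : (ε : ℤ) ≠ 0)
  rw [hval]
  exact ⟨Rat.num_div_eq_of_coprime hpos hcop, Rat.den_div_eq_of_coprime hpos hcop⟩

lemma parents_lemma (l : List ℤ) (hl : ∀ a ∈ l, 2 ≤ |a|) (c σ : ℤ)
    (hσ : σ = 1 ∨ σ = -1) (hc : 2 ≤ σ * c) :
    IsFareyParents (cfVal (l ++ [c])) (cfVal l) (cfVal (l ++ [c - σ])) ∧
    (cfVal (l ++ [c])).den ≠ 1 := by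
  have hl0 : ∀ a ∈ l, a ≠ 0 := by
    intro a ha
    have := hl a ha
    rcases abs_cases a with ⟨h, _⟩ | ⟨h, _⟩ <;> omega
  have hc0 : c ≠ 0 := by rcases hσ with rfl | rfl <;> omega
  have hcabs : 2 ≤ |c| := by
    rcases hσ with rfl | rfl
    · rw [abs_of_nonneg (by omega)]; omega
    · rw [abs_of_nonpos (by omega)]; omega
  have hdl : ∀ a ∈ l.dropLast, 2 ≤ |a| := fun a ha => hl a (List.dropLast_subset l ha)
  have hKne : K l ≠ 0 := K_ne l hl0 hdl
  have hKl1 : 1 ≤ |K l| := by have := abs_pos.mpr hKne; omega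
  have hJ : |J l| < |K l| := mag3 l hl
  set ε0 := sg (K l) with hε0def
  have hε0 : ε0 = 1 ∨ ε0 = -1 := sg_pm _
  have hε0K : ε0 * K l = |K l| := sg_mul _ hKne
  -- key positivity of ε1 * K (l ++ [c]) where ε1 = σ * ε0
  have e1 : σ * ε0 * K (l ++ [c]) = (σ * c) * (ε0 * K l) + (σ * ε0) * J l := by
    rw [K_append]; ring
  have hJb : -(|K l| - 1) ≤ σ * ε0 * J l ∧ σ * ε0 * J l ≤ |K l| - 1 := by
    have h1 : |σ * ε0 * J l| = |J l| := by
      rcases hσ with h | h <;> rcases hε0 with h' | h' <;> rw [h, h'] <;> simp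
    have h2 := le_abs_self (σ * ε0 * J l)
    have h3 := neg_abs_le (σ * ε0 * J l)
    omega
  have hmul : 2 * (ε0 * K l) ≤ (σ * c) * (ε0 * K l) :=
    mul_le_mul_of_nonneg_right hc (by rw [hε0K]; exact abs_nonneg _)
  have hK1 : |K l| + 1 ≤ σ * ε0 * K (l ++ [c]) := by
    linarith [e1, hmul, hJb.1, hε0K]
  -- num and den of x
  have hx := cf_num_den (l ++ [c])
    (by intro a ha; rcases List.mem_append.mp ha with h | h
        · exact hl0 a h
        · simp at h; omega)
    (by rw [List.dropLast_concat]; exact hl)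
    (σ * ε0)
    (by rcases hσ with h | h <;> rcases hε0 with h' | h' <;> simp [h, h'])
    (by omega)
  obtain ⟨hnum, hden⟩ := hx
  have hDt : K (l ++ [c]) * Kt l - K l * Kt (l ++ [c]) = Dt (l ++ [c]) := by
    rw [Dt, J_append, Jt_append]
  constructor
  · refine ⟨ε0 * Kt l, ε0 * K l,
      σ * ε0 * Kt (l ++ [c]) - ε0 * Kt l, σ * ε0 * K (l ++ [c]) - ε0 * K l,
      ?_, ?_, ?_, ?_, ?_, ?_, ?_⟩
    · omega
    · omega
    · omega
    · omega
    · have hsq : ε0 * ε0 = 1 := by rcases hε0 with h | h <;> rw [h] <;> norm_num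
      have hdet : ε0 * Kt l * (σ * ε0 * K (l ++ [c]) - ε0 * K l) -
          ε0 * K l * (σ * ε0 * Kt (l ++ [c]) - ε0 * Kt l) =
          (σ * (ε0 * ε0)) * (K (l ++ [c]) * Kt l - K l * Kt (l ++ [c])) := by ring
      rw [hDt] at hdet
      have hdet2 : ε0 * Kt l * (σ * ε0 * K (l ++ [c]) - ε0 * K l) -
          ε0 * K l * (σ * ε0 * Kt (l ++ [c]) - ε0 * Kt l) = σ * Dt (l ++ [c]) := by
        linear_combination hdet + (σ * Dt (l ++ [c])) * hsq
      rcases hσ with rfl | rfl <;> rcases Dt_pm (l ++ [c]) with hD | hD <;>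
        rw [hD] at hdet2 <;> omega
    · rw [cfVal_eq l hl0 hdl]
      push_cast
      rw [mul_div_mul_left]
      exact_mod_cast (by rcases hε0 with h | h <;> rw [h] <;> norm_num : (ε0 : ℤ) ≠ 0)
    · -- the other parent
      have hc0' : c - σ ≠ 0 := by rcases hσ with rfl | rfl <;> omega
      rw [cfVal_eq (l ++ [c - σ])
        (by intro a ha; rcases List.mem_append.mp ha with h | h
            · exact hl0 a h
            · simp at h; omega)
        (by rw [List.dropLast_concat]; exact hl)]
      have eK : K (l ++ [c - σ]) = K (l ++ [c]) - σ * K l := by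
        rw [K_append, K_append]; ring
      have eKt : Kt (l ++ [c - σ]) = Kt (l ++ [c]) - σ * Kt l := by
        rw [Kt_append, Kt_append]; ring
      rw [eK, eKt]
      have hnz : (σ * ε0 : ℤ) ≠ 0 := by
        rcases hσ with h | h <;> rcases hε0 with h' | h' <;> rw [h, h'] <;> norm_num
      -- show equality by multiplying numerator and denominator by σ * ε0
      have e3 : (σ * ε0) * (σ * ε0 * Kt (l ++ [c]) - ε0 * Kt l) = Kt (l ++ [c]) - σ * Kt l := by
        rcases hσ with h | h <;> rcases hε0 with h' | h' <;> rw [h, h'] <;> ring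
      have e4 : (σ * ε0) * (σ * ε0 * K (l ++ [c]) - ε0 * K l) = K (l ++ [c]) - σ * K l := by
        rcases hσ with h | h <;> rcases hε0 with h' | h' <;> rw [h, h'] <;> ring
      rw [← e3, ← e4]
      push_cast
      rw [mul_div_mul_left]
      exact_mod_cast hnz
  · have : 2 ≤ ((cfVal (l ++ [c])).den : ℤ) := by rw [hden]; omega
    omega

lemma parent_den {x u v : ℚ} (h : IsFareyParents x u v) : u.den < x.den ∧ v.den < x.den := by
  obtain ⟨a, b, c, d, hb, hd, hbd, hac, hdet, hu, hv⟩ := h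
  have hub : (u.den : ℤ) ∣ b := by
    rw [hu, ← Rat.divInt_eq_div]; exact Rat.den_dvd a b
  have hvd : (v.den : ℤ) ∣ d := by
    rw [hv, ← Rat.divInt_eq_div]; exact Rat.den_dvd c d
  have h1 : (u.den : ℤ) ≤ b := Int.le_of_dvd (by omega) hub
  have h2 : (v.den : ℤ) ≤ d := Int.le_of_dvd (by omega) hvd
  constructor <;> [ (have := h1) ; (have := h2) ] <;> omega

lemma farey_aux_uniq {p q a b a' b' e : ℤ} (hq : 2 ≤ q)
    (hcop : IsCoprime q p)
    (hb1 : 1 ≤ b) (hb2 : b ≤ q - 1) (hb1' : 1 ≤ b') (hb2' : b' ≤ q - 1)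
    (he : a * q - b * p = e) (he' : a' * q - b' * p = e') (hee : e = e') :
    a = a' ∧ b = b' := by
  subst hee
  have h1 : (a - a') * q = (b - b') * p := by linear_combination he - he'
  have h2 : q ∣ (b - b') * p := ⟨a - a', by rw [← h1]; ring⟩
  have h3 : q ∣ (b - b') := (IsCoprime.dvd_of_dvd_mul_right hcop h2)
  have h4 : b - b' = 0 := by
    by_contra hne
    have hle : q ≤ |b - b'| := Int.le_of_dvd (abs_pos.mpr hne) ((dvd_abs _ _).mpr h3)
    rcases abs_cases (b - b') with ⟨hh, _⟩ | ⟨hh, _⟩ <;> omega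
  have h5 : b = b' := by omega
  constructor
  · have : (a - a') * q = 0 := by rw [h1, h4]; ring
    have := mul_eq_zero.mp this
    omega
  · exact h5

lemma parents_unique {x u v u' v' : ℚ} (hden : x.den ≠ 1)
    (h : IsFareyParents x u v) (h' : IsFareyParents x u' v') :
    (u = u' ∧ v = v') ∨ (u = v' ∧ v = u') := by
  obtain ⟨a, b, c, d, hb, hd, hbd, hac, hdet, hu, hv⟩ := h
  obtain ⟨a', b', c', d', hb', hd', hbd', hac', hdet', hu', hv'⟩ := h'
  set p := x.num with hp
  set q := (x.den : ℤ) with hqdef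
  have hq : 2 ≤ q := by
    have := x.pos
    simp only [hqdef]
    omega
  have hcop : IsCoprime q p := by
    rw [Int.isCoprime_iff_gcd_eq_one, Int.gcd_comm]
    exact x.reduced
  have hde : a * q - b * p = a * d - b * c := by
    have h1 : d = q - b := by omega
    have h2 : c = p - a := by omega
    rw [h1, h2]; ring
  have hde' : a' * q - b' * p = a' * d' - b' * c' := by
    have h1 : d' = q - b' := by omega
    have h2 : c' = p - a' := by omega
    rw [h1, h2]; ring
  have hc : c = p - a := by omega
  have hc' : c' = p - a' := by omega
  have hdd : d = q - b := by omega
  have hdd' : d' = q - b' := by omega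
  rcases hdet with h1 | h1 <;> rcases hdet' with h2 | h2
  · -- both +1 : same
    obtain ⟨ea, eb⟩ := farey_aux_uniq hq hcop hb (by omega) hb' (by omega)
      (by rw [hde, h1]) (by rw [hde', h2]) rfl
    left
    constructor
    · rw [hu, hu', ea, eb]
    · rw [hv, hv', hc, hc', hdd, hdd', ea, eb]
  · -- det = 1, det' = -1 : swapped
    obtain ⟨ea, eb⟩ := farey_aux_uniq (a := a) (b := b) (a' := p - a') (b' := q - b')
      (e := (1:ℤ)) (e' := (1:ℤ)) hq hcop hb (by omega) (by omega) (by omega)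
      (by rw [hde, h1])
      (by rw [show (p - a') * q - (q - b') * p = -(a' * q - b' * p) by ring, hde', h2] <;> norm_num)
      rfl
    right
    constructor
    · rw [hu, hv', ea, eb, hc', hdd']
    · rw [hv, hu', hc, hdd, ea, eb,
        show p - (p - a') = a' by ring, show q - (q - b') = b' by ring]
  · -- det = -1, det' = 1 : swapped
    obtain ⟨ea, eb⟩ := farey_aux_uniq (a := a) (b := b) (a' := p - a') (b' := q - b')
      (e := (-1:ℤ)) (e' := (-1:ℤ)) hq hcop hb (by omega) (by omega) (by omega)
      (by rw [hde, h1])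
      (by rw [show (p - a') * q - (q - b') * p = -(a' * q - b' * p) by ring, hde', h2] <;> norm_num)
      rfl
    right
    constructor
    · rw [hu, hv', ea, eb, hc', hdd']
    · rw [hv, hu', hc, hdd, ea, eb,
        show p - (p - a') = a' by ring, show q - (q - b') = b' by ring]
  · -- both -1 : same
    obtain ⟨ea, eb⟩ := farey_aux_uniq hq hcop hb (by omega) hb' (by omega)
      (by rw [hde, h1]) (by rw [hde', h2]) rfl
    left
    constructor
    · rw [hu, hu', ea, eb]
    · rw [hv, hv', hc, hc', hdd, hdd', ea, eb]

lemma depth_unique : ∀ (N : ℕ) (x : ℚ), x.den ≤ N → ∀ {m n : ℕ}, DepthRel x m → DepthRel x n → m = n := by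
  intro N
  induction N using Nat.strong_induction_on with
  | _ N IH =>
      intro x hxN m n h1 h2
      cases h1 with
      | int _ h =>
          cases h2 with
          | int _ _ => rfl
          | step _ u' v' m' k' hden' hp' hu' hv' => exact absurd h hden'
      | step _ u v m1 k1 hden hp hu hv =>
          cases h2 with
          | int _ h => exact absurd h hden
          | step _ u' v' m1' k1' hden' hp' hu' hv' =>
              have hdu := parent_den hp
              have hdu' := parent_den hp'
              rcases parents_unique hden hp hp' with ⟨e1, e2⟩ | ⟨e1, e2⟩
              · subst e1; subst e2
                have hm := IH u.den (by omega) u le_rfl hu hu'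
                have hk := IH v.den (by omega) v le_rfl hv hv'
                omega
              · subst e1; subst e2
                have hm := IH u.den (by omega) u le_rfl hu hv'
                have hk := IH v.den (by omega) v le_rfl hv hu'
                omega

lemma fareyDepth_eq {x : ℚ} {n : ℕ} (h : DepthRel x n) : fareyDepth x = n := by
  have hset : {k | DepthRel x k} = {n} := by
    ext k
    exact ⟨fun hk => depth_unique x.den x le_rfl hk h, fun hk => by simp at hk; rw [hk]; exact h⟩
  rw [fareyDepth, hset, csInf_singleton]

lemma depthrel_int (z : ℤ) : DepthRel (z : ℚ) 0 := DepthRel.int _ (Rat.den_intCast z)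

lemma depthrel_zero : DepthRel (0 : ℚ) 0 := DepthRel.int _ rfl

lemma sg_sq (x : ℤ) : sg x * sg x = 1 := by unfold sg; split <;> norm_num

lemma chain (l : List ℤ) (hl : ∀ a ∈ l, 2 ≤ |a|) (σ : ℤ) (hσ : σ = 1 ∨ σ = -1)
    (M N : ℕ) (hM : DepthRel (cfVal l) M) (y : ℚ) (hy : cfVal (l ++ [σ]) = y)
    (hN : DepthRel y N) (hMN : M ≤ N + 1) :
    ∀ k : ℕ, 2 ≤ k →
      DepthRel (cfVal (l ++ [σ * (k : ℤ)])) (if k = 2 then 1 + min M N else 1 + M) := by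
  intro k hk
  induction k, hk using Nat.le_induction with
  | base =>
      have hc : 2 ≤ σ * (σ * ((2 : ℕ) : ℤ)) := by rcases hσ with rfl | rfl <;> norm_num
      obtain ⟨hp, hden⟩ := parents_lemma l hl (σ * ((2:ℕ) : ℤ)) σ hσ hc
      have he : σ * ((2:ℕ) : ℤ) - σ = σ := by push_cast; ring
      rw [he] at hp
      have hv : DepthRel (cfVal (l ++ [σ])) N := by rw [hy]; exact hN
      simpa using DepthRel.step _ _ _ M N hden hp hM hv
  | succ k hk IH =>
      have hk2 : (2:ℤ) ≤ (k:ℤ) := by exact_mod_cast hk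
      have hc : 2 ≤ σ * (σ * ((k+1 : ℕ) : ℤ)) := by
        have := sg_sq
        rcases hσ with rfl | rfl <;> push_cast <;> nlinarith
      obtain ⟨hp, hden⟩ := parents_lemma l hl (σ * ((k+1:ℕ) : ℤ)) σ hσ hc
      have he : σ * ((k+1:ℕ) : ℤ) - σ = σ * (k : ℤ) := by push_cast; ring
      rw [he] at hp
      set Dv := if k = 2 then 1 + min M N else 1 + M with hDv
      have hv : DepthRel (cfVal (l ++ [σ * (k : ℤ)])) Dv := IH
      have hge : M ≤ Dv := by
        rw [hDv]; split <;> omega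
      have := DepthRel.step _ _ _ M Dv hden hp hM hv
      rw [min_eq_left hge] at this
      have hne : ¬ (k + 1 = 2) := by omega
      rw [if_neg hne]
      exact this

lemma auxSeqAux_length : ∀ (l : List ℤ) (ι : ℕ × ℕ) (a : ℤ),
    (auxSeqAux ι a l).length = l.length := by
  intro l
  induction l with
  | nil => intro ι a; rfl
  | cons b l ih => intro ι a; simp [auxSeqAux, ih]

lemma auxSeq_length (ι : ℕ × ℕ) (L : List ℤ) : (auxSeq ι L).length = L.length := by
  cases L with
  | nil => rfl
  | cons a l => simp [auxSeq, auxSeqAux_length]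

lemma auxSeqAux_step : ∀ (l : List ℤ) (ι : ℕ × ℕ) (a : ℤ) (j : ℕ), j + 1 < l.length →
    (auxSeqAux ι a l).getD (j+1) (0,0) =
      auxStep ((auxSeqAux ι a l).getD j (0,0)) (l.getD j 0) (l.getD (j+1) 0) := by
  intro l
  induction l with
  | nil => intro ι a j h; simp at h
  | cons b l ih =>
      intro ι a j h
      cases j with
      | zero =>
          cases l with
          | nil => simp at h
          | cons c l' => rfl
      | succ j =>
          have h' : j + 1 < l.length := by simp at h; omega
          simpa [auxSeqAux] using ih (auxStep ι a b) b j h'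

lemma auxSeq_step (ι : ℕ × ℕ) (L : List ℤ) (j : ℕ) (h : j + 1 < L.length) :
    (auxSeq ι L).getD (j+1) (0,0) =
      auxStep ((auxSeq ι L).getD j (0,0)) (L.getD j 0) (L.getD (j+1) 0) := by
  cases L with
  | nil => simp at h
  | cons a l =>
      cases j with
      | zero =>
          cases l with
          | nil => simp at h
          | cons b l' => rfl
      | succ j =>
          have h' : j + 1 < l.length := by simp at h; omega
          simpa [auxSeq, auxSeqAux] using auxSeqAux_step l ι a j h'

lemma sum_take_succ (ds : List (ℕ × ℕ)) (i : ℕ) (h : i < ds.length) :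
    (((ds.take (i+1)).map Prod.fst).sum) =
      (((ds.take i).map Prod.fst).sum) + (ds.getD i (0,0)).1 := by
  rw [List.getD_eq_getElem ds (0,0) h]
  have h' : i < (ds.map Prod.fst).length := by simpa using h
  have e := List.sum_take_succ (ds.map Prod.fst) i h'
  rw [List.map_take, List.map_take, e]
  congr 1
  simp

lemma take_succ_getD (L : List ℤ) (i : ℕ) (h : i < L.length) :
    L.take (i+1) = L.take i ++ [L.getD i 0] := by
  rw [List.take_succ, List.getElem?_eq_getElem h, List.getD_eq_getElem L 0 h]
  simp

lemma getD_mem (L : List ℤ) (i : ℕ) (h : i < L.length) : L.getD i 0 ∈ L := by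
  rw [List.getD_eq_getElem L 0 h]
  exact List.getElem_mem h

lemma sg_prod_pos (x y : ℤ) (hx : x ≠ 0) (hy : y ≠ 0) : 0 < x * y ↔ sg x = sg y := by
  constructor
  · intro h
    rcases lt_trichotomy x 0 with h1 | h1 | h1
    · have h2 : y < 0 := by nlinarith
      simp [sg, not_le.mpr h1, not_le.mpr h2]
    · exact absurd h1 hx
    · have h2 : 0 < y := by nlinarith
      simp [sg, h1.le, h2.le]
  · intro h
    rcases lt_trichotomy x 0 with h1 | h1 | h1
    · have hx' : sg x = -1 := by simp [sg, not_le.mpr h1]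
      have h2 : y < 0 := by
        by_contra hy2
        push_neg at hy2
        have : sg y = 1 := by simp [sg, hy2]
        rw [hx', this] at h
        norm_num at h
      exact mul_pos_of_neg_of_neg h1 h2
    · exact absurd h1 hx
    · have hx' : sg x = 1 := by simp [sg, h1.le]
      have h2 : 0 < y := by
        rcases lt_trichotomy y 0 with h2 | h2 | h2
        · have : sg y = -1 := by simp [sg, not_le.mpr h2]
          rw [hx', this] at h
          norm_num at h
        · exact absurd h2 hy
        · exact h2
      exact mul_pos h1 h2

lemma sg_neg (x : ℤ) (hx : x ≠ 0) : sg (-x) = - sg x := by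
  unfold sg; split_ifs <;> omega

lemma cfVal_sg (σ : ℤ) (hσ : σ = 1 ∨ σ = -1) : DepthRel (cfVal [σ]) 0 := by
  rcases hσ with rfl | rfl
  · have : cfVal [(1:ℤ)] = 1 := by norm_num [cfVal]
    rw [this]; exact DepthRel.int _ rfl
  · have : cfVal [(-1:ℤ)] = -1 := by norm_num [cfVal]
    rw [this]; exact DepthRel.int _ rfl

/-- Let `a = (a₁, …, aₙ)` be a nonempty list of even nonzero integers, let
`xᵢ = [a₁, …, aᵢ]` (so `x₀ = 0`), and let `(d₁,e₁), …, (dₙ,eₙ)` be the auxiliary data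
sequence of `a` starting from `(1,1)` if `|a₁| = 2` and `(1,0)` if `|a₁| ≥ 4`.
Then for every `1 ≤ i ≤ n`: `x_{i−1}` is a Farey parent of `xᵢ`,
`dᵢ = d(xᵢ) − d(x_{i−1})`, `eᵢ = d(xᵢ) − d(wᵢ)` where `wᵢ` is the other Farey parent
of `xᵢ`, and `d(xᵢ) = d₁ + ⋯ + dᵢ`; in particular `d([a]) = d₁ + ⋯ + dₙ`. -/
theorem stmt5 (L : List ℤ) (hL : L ≠ []) (h : ∀ a ∈ L, Even a ∧ a ≠ 0) :
    (∀ i : ℕ, 1 ≤ i → i ≤ L.length →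
      ∃ w : ℚ,
        IsFareyParents (cfVal (L.take i)) (cfVal (L.take (i - 1))) w ∧
        fareyDepth (cfVal (L.take i)) =
          fareyDepth (cfVal (L.take (i - 1))) +
            ((auxSeq (auxInit L.headI) L).getD (i - 1) (0, 0)).1 ∧
        fareyDepth (cfVal (L.take i)) =
          fareyDepth w + ((auxSeq (auxInit L.headI) L).getD (i - 1) (0, 0)).2 ∧
        fareyDepth (cfVal (L.take i)) =
          (((auxSeq (auxInit L.headI) L).take i).map Prod.fst).sum) ∧
    fareyDepth (cfVal L) = ((auxSeq (auxInit L.headI) L).map Prod.fst).sum := by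
  have hL2 : ∀ a ∈ L, 2 ≤ |a| := by
    intro a ha
    obtain ⟨he, h0⟩ := h a ha
    obtain ⟨r, rfl⟩ := he
    rcases abs_cases (r + r) with ⟨hh, _⟩ | ⟨hh, _⟩ <;> omega
  have hn1 : 1 ≤ L.length := List.length_pos_iff.mpr hL
  have hdslen : (auxSeq (auxInit L.headI) L).length = L.length := auxSeq_length _ L
  have main : ∀ i : ℕ, 1 ≤ i → i ≤ L.length →
      (IsFareyParents (cfVal (L.take i)) (cfVal (L.take (i-1)))
          (cfVal (L.take (i-1) ++ [L.getD (i-1) 0 - sg (L.getD (i-1) 0)])) ∧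
        DepthRel (cfVal (L.take i)) (((auxSeq (auxInit L.headI) L).take i).map Prod.fst).sum ∧
        DepthRel (cfVal (L.take (i-1)))
          (((auxSeq (auxInit L.headI) L).take (i-1)).map Prod.fst).sum ∧
        (∃ t : ℕ, DepthRel (cfVal (L.take (i-1) ++ [L.getD (i-1) 0 - sg (L.getD (i-1) 0)])) t ∧
          (((auxSeq (auxInit L.headI) L).take i).map Prod.fst).sum
            = t + ((auxSeq (auxInit L.headI) L).getD (i-1) (0,0)).2) ∧
        (((auxSeq (auxInit L.headI) L).take i).map Prod.fst).sum
          = (((auxSeq (auxInit L.headI) L).take (i-1)).map Prod.fst).sum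
            + ((auxSeq (auxInit L.headI) L).getD (i-1) (0,0)).1 ∧
        ((auxSeq (auxInit L.headI) L).getD (i-1) (0,0) = (0,1) ∨
          (auxSeq (auxInit L.headI) L).getD (i-1) (0,0) = (1,0) ∨
          (auxSeq (auxInit L.headI) L).getD (i-1) (0,0) = (1,1))) := by
    intro i hi1
    induction i, hi1 using Nat.le_induction with
    | base =>
        intro _
        rcases L with _ | ⟨a, l⟩
        · exact absurd rfl hL
        have ha2 : 2 ≤ |a| := hL2 a (by simp)
        have ha0 : a ≠ 0 := (h a (by simp)).2
        have hσ := sg_pm a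
        have hσa : sg a * a = |a| := sg_mul a ha0
        have hσσ : sg a * sg a = 1 := sg_sq a
        have habs : (|a| : ℤ) = (a.natAbs : ℤ) := Int.abs_eq_natAbs a
        have hc : 2 ≤ sg a * a := by omega
        obtain ⟨hp, hden⟩ := parents_lemma [] (by simp) a (sg a) hσ hc
        -- the w-depth
        have hwd : ∃ tw : ℕ, DepthRel (cfVal ([] ++ [a - sg a])) tw ∧
            (|a| = 2 → tw = 0) ∧ (|a| ≠ 2 → tw = 1) := by
          by_cases habs2 : |a| = 2
          · refine ⟨0, ?_, fun _ => rfl, fun hh => absurd habs2 hh⟩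
            have he : a - sg a = sg a := by
              have h1 : sg a * a = 2 := by omega
              linear_combination sg a * h1 - a * hσσ
            rw [he]
            simpa using cfVal_sg (sg a) hσ
          · refine ⟨1, ?_, fun hh => absurd hh habs2, fun _ => rfl⟩
            have hk2 : 2 ≤ a.natAbs - 1 := by omega
            have he : a - sg a = sg a * ((a.natAbs - 1 : ℕ) : ℤ) := by
              have hcast : ((a.natAbs - 1 : ℕ) : ℤ) = (a.natAbs : ℤ) - 1 := by
                have : 1 ≤ a.natAbs := by omega
                push_cast [this]
                ring
              rw [hcast]
              have h1 : sg a * a = (a.natAbs : ℤ) := by omega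
              linear_combination sg a * h1 - a * hσσ
            have hch := chain [] (by simp) (sg a) hσ 0 0 depthrel_zero
              (cfVal ([] ++ [sg a])) rfl (by simpa using cfVal_sg (sg a) hσ) (by omega)
              (a.natAbs - 1) hk2
            rw [← he] at hch
            have : (if a.natAbs - 1 = 2 then 1 + min 0 0 else 1 + 0) = 1 := by
              split <;> rfl
            rwa [this] at hch
        obtain ⟨tw, hwd, hw2, hw4⟩ := hwd
        have hxd : DepthRel (cfVal [a]) (1 + min 0 tw) := by
          have := DepthRel.step (cfVal ([] ++ [a])) (cfVal []) (cfVal ([] ++ [a - sg a]))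
            0 tw hden hp depthrel_zero hwd
          simpa using this
        have hmin : 1 + min 0 tw = 1 := by omega
        rw [hmin] at hxd
        -- auxInit headI
        have hds0 : (auxSeq (auxInit (a :: l).headI) (a :: l)).getD 0 (0,0) = auxInit a := rfl
        have hds1 : (((auxSeq (auxInit (a :: l).headI) (a :: l)).take 1).map Prod.fst).sum
            = (auxInit a).1 := by
          show ([auxInit a].map Prod.fst).sum = (auxInit a).1
          simp
        have hds00 : (((auxSeq (auxInit (a :: l).headI) (a :: l)).take 0).map Prod.fst).sum
            = 0 := rfl
        refine ⟨?_, ?_, ?_, ?_, ?_, ?_⟩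
        · simpa using hp
        · show DepthRel (cfVal [a]) _
          rw [hds1]
          have : (auxInit a).1 = 1 := by unfold auxInit; split <;> rfl
          rw [this]; exact hxd
        · exact depthrel_zero
        · refine ⟨tw, by simpa using hwd, ?_⟩
          rw [hds1, hds0]
          by_cases habs2 : |a| = 2
          · rw [hw2 habs2]; unfold auxInit; rw [if_pos habs2]; simp
          · rw [hw4 habs2]; unfold auxInit; rw [if_neg habs2]; simp
        · rw [hds1, hds00, hds0]
          unfold auxInit; split <;> rfl
        · rw [hds0]; unfold auxInit; split
          · right; right; rfl
          · right; left; rfl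
    | succ i hi IH =>
        intro hin
        obtain ⟨hp_i, hx_i, hxp_i, ⟨t, hw_i, ht_i⟩, hsum_i, hmem_i⟩ := IH (by omega)
        simp only [Nat.add_sub_cancel]
        have hiL : i < L.length := by omega
        have hi1L : i - 1 < L.length := by omega
        have hbmem : L.getD i 0 ∈ L := getD_mem L i hiL
        have hamem : L.getD (i-1) 0 ∈ L := getD_mem L (i-1) hi1L
        set b := L.getD i 0 with hbdef
        set a := L.getD (i-1) 0 with hadef
        clear_value b a
        have hb2 : 2 ≤ |b| := hL2 b hbmem
        have hb0 : b ≠ 0 := (h b hbmem).2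
        have hbe : Even b := (h b hbmem).1
        have ha2 : 2 ≤ |a| := hL2 a hamem
        have ha0 : a ≠ 0 := (h a hamem).2
        have hσb := sg_pm b
        have hσa := sg_pm a
        have hσσb : sg b * sg b = 1 := sg_sq b
        have hσσa : sg a * sg a = 1 := sg_sq a
        have hσbb : sg b * b = |b| := sg_mul b hb0
        have hσaa : sg a * a = |a| := sg_mul a ha0
        have htake1 : L.take (i+1) = L.take i ++ [b] := by
          have e := take_succ_getD L i hiL
          rw [← hbdef] at e
          exact e
        have htake0 : L.take i = L.take (i-1) ++ [a] := by
          have e := take_succ_getD L (i-1) hi1L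
          rw [Nat.sub_add_cancel hi, ← hadef] at e
          exact e
        have hEnt : ∀ x ∈ L.take i, 2 ≤ |x| := fun x hx => hL2 x (List.take_subset _ _ hx)
        have hEnt' : ∀ x ∈ L.take (i-1), 2 ≤ |x| := fun x hx => hL2 x (List.take_subset _ _ hx)
        have hds_step : (auxSeq (auxInit L.headI) L).getD i (0,0)
            = auxStep ((auxSeq (auxInit L.headI) L).getD (i-1) (0,0)) a b := by
          have e := auxSeq_step (auxInit L.headI) L (i-1)
            (by rw [Nat.sub_add_cancel hi]; exact hiL)
          rw [Nat.sub_add_cancel hi, ← hbdef, ← hadef] at e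
          exact e
        have hsum_succ : (((auxSeq (auxInit L.headI) L).take (i+1)).map Prod.fst).sum
            = (((auxSeq (auxInit L.headI) L).take i).map Prod.fst).sum
              + ((auxSeq (auxInit L.headI) L).getD i (0,0)).1 :=
          sum_take_succ _ i (hdslen ▸ hiL)
        obtain ⟨hp, hden⟩ := parents_lemma (L.take i) hEnt b (sg b) hσb (by omega)
        rw [← htake1] at hp hden
        have hylist : cfVal (L.take i ++ [sg b]) = cfVal (L.take (i-1) ++ [a + sg b]) := by
          rw [htake0, List.append_assoc]
          exact cfVal_merge _ a (sg b) hσb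
        set S := (((auxSeq (auxInit L.headI) L).take i).map Prod.fst).sum with hS
        set Sp := (((auxSeq (auxInit L.headI) L).take (i-1)).map Prod.fst).sum with hSp
        set P := (auxSeq (auxInit L.headI) L).getD (i-1) (0,0) with hPdef
        clear_value S Sp P
        have hP1 : P.1 ≤ 1 ∧ P.2 ≤ 1 := by
          rcases hmem_i with h' | h' | h' <;> rw [h'] <;> exact ⟨by norm_num, by norm_num⟩
        have habota : a * b ≠ 0 := mul_ne_zero ha0 hb0
        have hydata : ∃ N : ℕ, DepthRel (cfVal (L.take i ++ [sg b])) N ∧ S ≤ N + 1 ∧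
            (0 < a * b → N = 1 + Sp) ∧ (a * b < 0 → N = t) := by
          rcases lt_or_gt_of_ne habota with hneg | hpos
          · have hsgb : sg b = - sg a := by
              have h0 : a * (-b) = -(a * b) := by ring
              have h1 : 0 < a * (-b) := by omega
              have h2 := (sg_prod_pos a (-b) ha0 (neg_ne_zero.mpr hb0)).mp h1
              rw [sg_neg b hb0] at h2
              omega
            have he : a + sg b = a - sg a := by rw [hsgb]; ring
            refine ⟨t, ?_, by omega, fun hc' => absurd hc' (by omega), fun _ => rfl⟩
            rw [hylist, he]
            exact hw_i
          · have hsgb : sg b = sg a := ((sg_prod_pos a b ha0 hb0).mp hpos).symm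
            have hzc : 2 ≤ sg a * (a + sg a) := by
              have e : sg a * (a + sg a) = |a| + 1 := by rw [mul_add, hσaa, hσσa]
              omega
            obtain ⟨hpz, hdenz⟩ := parents_lemma (L.take (i-1)) hEnt' (a + sg a) (sg a) hσa hzc
            rw [add_sub_cancel_right, ← htake0] at hpz
            have hyz := DepthRel.step _ _ _ Sp S hdenz hpz hxp_i hx_i
            rw [min_eq_left (by omega : Sp ≤ S)] at hyz
            refine ⟨1 + Sp, ?_, by omega, fun _ => rfl, fun hc' => absurd hc' (by omega)⟩
            rw [hylist, hsgb]
            exact hyz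
        obtain ⟨N, hyN, hSN, hNpos, hNneg⟩ := hydata
        by_cases hb4 : 4 ≤ |b|
        · -- |b| ≥ 4 : chain case, new data (1,0)
          have hbna : (|b| : ℤ) = (b.natAbs : ℤ) := Int.abs_eq_natAbs b
          have hk3 : 3 ≤ b.natAbs - 1 := by omega
          have he : b - sg b = sg b * ((b.natAbs - 1 : ℕ) : ℤ) := by
            have hcast : ((b.natAbs - 1 : ℕ) : ℤ) = (b.natAbs : ℤ) - 1 := by
              have h1 : 1 ≤ b.natAbs := by omega
              push_cast [h1]
              ring
            rw [hcast]
            have h1 : sg b * b = (b.natAbs : ℤ) := by omega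
            linear_combination sg b * h1 - b * hσσb
          have hch := chain (L.take i) hEnt (sg b) hσb S N hx_i
            (cfVal (L.take i ++ [sg b])) rfl hyN hSN (b.natAbs - 1) (by omega)
          rw [← he, if_neg (by omega : ¬ (b.natAbs - 1 = 2))] at hch
          have hx' := DepthRel.step _ _ _ S (1 + S) hden hp hx_i hch
          rw [min_eq_left (by omega : S ≤ 1 + S)] at hx'
          have hP' : (auxSeq (auxInit L.headI) L).getD i (0,0) = (1, 0) := by
            rw [hds_step]; unfold auxStep; rw [if_pos hb4]
          refine ⟨hp, ?_, hx_i, ⟨1 + S, hch, ?_⟩, hsum_succ, ?_⟩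
          · rw [hsum_succ, hP']
            show DepthRel _ (S + 1)
            rw [show S + 1 = 1 + S by omega]
            exact hx'
          · rw [hsum_succ, hP']
            show S + 1 = 1 + S + 0
            omega
          · rw [hP']; right; left; rfl
        · -- |b| = 2
          have habs2 : |b| = 2 := by
            obtain ⟨r, rfl⟩ := hbe
            rcases abs_cases (r + r) with ⟨hh, _⟩ | ⟨hh, _⟩ <;> omega
          have hbsg : b - sg b = sg b := by
            have h1 : sg b * b = 2 := by omega
            linear_combination sg b * h1 - b * hσσb
          have hw' : DepthRel (cfVal (L.take i ++ [b - sg b])) N := by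
            rw [hbsg]; exact hyN
          have hx' := DepthRel.step _ _ _ S N hden hp hx_i hw'
          rcases lt_or_gt_of_ne habota with hneg | hpos
          · have hN := hNneg hneg
            have hsign : ¬ (0 < a * b) := by omega
            by_cases hP10 : P = (1, 0)
            · have htS : t = S := by rw [hP10] at ht_i; omega
              have hP' : (auxSeq (auxInit L.headI) L).getD i (0,0) = (1, 1) := by
                rw [hds_step]
                unfold auxStep
                rw [if_neg hb4, if_neg hsign, if_pos hP10]
              have hxval : DepthRel (cfVal (L.take (i+1))) (S + 1) := by
                have e : 1 + min S N = S + 1 := by omega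
                rw [e] at hx'
                exact hx'
              refine ⟨hp, ?_, hx_i, ⟨N, hw', ?_⟩, hsum_succ, ?_⟩
              · rw [hsum_succ, hP']
                exact hxval
              · rw [hsum_succ, hP']
                show S + 1 = N + 1
                omega
              · rw [hP']; right; right; rfl
            · have hP2 : P.2 = 1 := by
                rcases hmem_i with h' | h' | h'
                · rw [h']
                · exact absurd h' hP10
                · rw [h']
              have htS : S = t + 1 := by omega
              have hP' : (auxSeq (auxInit L.headI) L).getD i (0,0) = (0, 1) := by
                rw [hds_step]
                unfold auxStep
                rw [if_neg hb4, if_neg hsign, if_neg hP10]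
              have hxval : DepthRel (cfVal (L.take (i+1))) S := by
                have e : 1 + min S N = S := by omega
                rw [e] at hx'
                exact hx'
              refine ⟨hp, ?_, hx_i, ⟨N, hw', ?_⟩, hsum_succ, ?_⟩
              · rw [hsum_succ, hP']
                show DepthRel _ (S + 0)
                rw [show S + 0 = S by omega]
                exact hxval
              · rw [hsum_succ, hP']
                show S + 0 = N + 1
                omega
              · rw [hP']; left; rfl
          · have hN := hNpos hpos
            by_cases hP01 : P = (0, 1)
            · have hSSp : S = Sp := by rw [hP01] at hsum_i; omega
              have hP' : (auxSeq (auxInit L.headI) L).getD i (0,0) = (1, 0) := by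
                rw [hds_step]
                unfold auxStep
                rw [if_neg hb4, if_pos hpos, if_pos hP01]
              have hxval : DepthRel (cfVal (L.take (i+1))) (S + 1) := by
                have e : 1 + min S N = S + 1 := by omega
                rw [e] at hx'
                exact hx'
              refine ⟨hp, ?_, hx_i, ⟨N, hw', ?_⟩, hsum_succ, ?_⟩
              · rw [hsum_succ, hP']
                exact hxval
              · rw [hsum_succ, hP']
                show S + 1 = N + 0
                omega
              · rw [hP']; right; left; rfl
            · have hPd1 : P.1 = 1 := by
                rcases hmem_i with h' | h' | h'
                · exact absurd h' hP01
                · rw [h']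
                · rw [h']
              have hSSp : S = Sp + 1 := by omega
              have hP' : (auxSeq (auxInit L.headI) L).getD i (0,0) = (1, 1) := by
                rw [hds_step]
                unfold auxStep
                rw [if_neg hb4, if_pos hpos, if_neg hP01]
              have hxval : DepthRel (cfVal (L.take (i+1))) (S + 1) := by
                have e : 1 + min S N = S + 1 := by omega
                rw [e] at hx'
                exact hx'
              refine ⟨hp, ?_, hx_i, ⟨N, hw', ?_⟩, hsum_succ, ?_⟩
              · rw [hsum_succ, hP']
                exact hxval
              · rw [hsum_succ, hP']
                show S + 1 = N + 1
                omega
              · rw [hP']; right; right; rfl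
  constructor
  · intro i hi1 hin
    obtain ⟨hp, hx, hxp, ⟨t, hw, ht⟩, hsum, hmem⟩ := main i hi1 hin
    exact ⟨_, hp, by rw [fareyDepth_eq hx, fareyDepth_eq hxp]; exact hsum,
      by rw [fareyDepth_eq hx, fareyDepth_eq hw]; exact ht,
      by rw [fareyDepth_eq hx]⟩
  · obtain ⟨_, hx, _⟩ := main L.length hn1 le_rfl
    rw [List.take_length] at hx
    rw [fareyDepth_eq hx, ← hdslen, List.take_length]
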